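/- arXiv:1503.05496 — 2 statements merged into one kernel-verified Lean document; each statement's English description precedes it below -/
import Mathlib

section
/- Commutation untag–untag: for all distinct exception names s ≠ t, untagging in either order agrees up to the canonical exchange of summands; precisely, for every ex : E, Sum.map id (untag t) (untag s ex) = σ (Sum.map id (untag s) (untag t ex)), where σ : EVal t ⊕ (EVal s ⊕ E) → EVal s ⊕ (EVal t ⊕ E) is the canonical map σ = Sum.elim (Sum.inr ∘ Sum.inl) (Sum.elim Sum.inl (Sum.inr ∘ Sum.inr)). -/
section Exceptions

variable {EName : Type} [DecidableEq EName] {EVal : EName → Type}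

/-- Encapsulate an ordinary value as an exception named `e`. -/
def tag (e : EName) (v : EVal e) : (Σ e' : EName, EVal e') := ⟨e, v⟩

/-- Attempt to recover the value of an exception named `e`; propagate
exceptions with any other name. -/
def untag (e : EName) (ex : Σ e' : EName, EVal e') :
    EVal e ⊕ (Σ e' : EName, EVal e') :=
  if h : ex.1 = e then Sum.inl (h ▸ ex.2) else Sum.inr ex

/-- The try/catch combinator: normal results of `f` are returned, an exception
named `e` raised by `f` is recovered and its value passed to the handler `h`,
and any exception with another name is propagated. -/
def tryCatch {X Y : Type} (e : EName)
    (f : X → Y ⊕ (Σ e' : EName, EVal e'))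
    (h : EVal e → Y ⊕ (Σ e' : EName, EVal e')) :
    X → Y ⊕ (Σ e' : EName, EVal e') :=
  fun x => Sum.elim Sum.inl (Sum.elim h Sum.inr ∘ untag e) (f x)

end Exceptions

/-- Commutation untag–untag: for distinct names `s ≠ t`, untagging in either
order agrees up to the canonical exchange of summands `σ`. -/
theorem untag_untag_comm {EName : Type} [DecidableEq EName] {EVal : EName → Type}
    (s t : EName) (hst : s ≠ t) (ex : Σ e : EName, EVal e) :
    Sum.map id (untag t) (untag s ex) =
      Sum.elim (Sum.inr ∘ Sum.inl) (Sum.elim Sum.inl (Sum.inr ∘ Sum.inr))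
        (Sum.map id (untag s) (untag t ex)) := by
  obtain ⟨e, v⟩ := ex
  unfold untag
  by_cases hs : e = s <;> by_cases ht : e = t <;>
    simp_all [untag]
end

section
/- Commutation catch–catch: for all distinct exception names s ≠ t, every f : X → Y ⊕ E and handlers g : EVal t → Y ⊕ E and h : EVal s → Y ⊕ E, handling the exceptions of f named t and s in either order gives the same function; precisely, (fun x => Sum.elim Sum.inl (fun ex => Sum.elim g (Sum.elim h Sum.inr ∘ untag s) (untag t ex)) (f x)) = (fun x => Sum.elim Sum.inl (fun ex => Sum.elim h (Sum.elim g Sum.inr ∘ untag t) (untag s ex)) (f x)), where the first function checks the name t first and then s (propagating all other exceptions), and the second checks s first and then t. -/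
/-- Commutation catch–catch: for distinct names `s ≠ t`, handling the
exceptions of `f` named `t` and `s` in either order gives the same function. -/
theorem catch_catch_comm {EName : Type} [DecidableEq EName] {EVal : EName → Type}
    {X Y : Type} (s t : EName) (hst : s ≠ t)
    (f : X → Y ⊕ (Σ e : EName, EVal e))
    (g : EVal t → Y ⊕ (Σ e : EName, EVal e))
    (h : EVal s → Y ⊕ (Σ e : EName, EVal e)) :
    (fun x => Sum.elim Sum.inl
        (fun ex => Sum.elim g (Sum.elim h Sum.inr ∘ untag s) (untag t ex)) (f x)) =
      (fun x => Sum.elim Sum.inl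
        (fun ex => Sum.elim h (Sum.elim g Sum.inr ∘ untag t) (untag s ex)) (f x)) := by
  funext x
  cases f x with
  | inl y => rfl
  | inr ex =>
    obtain ⟨e, v⟩ := ex
    simp only [Sum.elim_inr, untag, Function.comp]
    by_cases he : e = t
    · subst he
      simp [untag, hst.symm]
    · by_cases he' : e = s
      · subst he'
        simp [untag, he]
      · simp [untag, he, he']
end
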